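/- Let r ≥ 1, let V₀ ⊆ ℝ^r be a rational linear subspace, and let v₀ ∈ ℚ^r. Set t = E(v₀) and L = L(V₀). Then: (i) t is a torsion element of the group (ℂ^×)^r; and (ii) for every Laurent polynomial f in r variables, f vanishes at every point of E(v₀ + V₀) if and only if f vanishes at every point of the coset {z ∈ (ℂ^×)^r : ∏_j z_j^{a_j} = ∏_j t_j^{a_j} for every a ∈ L}. (Thus the Zariski closure in (ℂ^×)^r of the exponential image of a rational affine subspace is a subtorus translated by a point of finite order; this is the mechanism by which the paper's Theorem 2.1 yields Corollaries 2.2 and 2.3, i.e. that components of characteristic varieties are subgroups translated by torsion points.) -/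

import Mathlib

open scoped BigOperators

/-- The exponential map `E : ℝ^r → (ℂ^×)^r`, `E(x)_j = e^{2πi x_j}`. -/
noncomputable def expTorusMap (r : ℕ) (x : Fin r → ℝ) : Fin r → ℂˣ :=
  fun j => Units.mk0 (Complex.exp (2 * (Real.pi : ℂ) * Complex.I * (x j : ℂ)))
    (Complex.exp_ne_zero _)

/-!
Write `χ_a(z) = ∏ z_j ^ a_j` and `t = E(v₀)`, so that `χ_a(E(v₀ + v)) = χ_a(t) · 𝐞⟨a, v⟩`.
A Laurent polynomial vanishing on `E(v₀ + V₀)` is thus a vanishing linear combination of the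
characters `ψ_a = 𝐞⟨a, ·⟩` of the group `V₀`, and Dedekind's independence of characters makes
the sum of its coefficients `c_a χ_a(t)` vanish along each fibre of `a ↦ ψ_a`. Such a fibre is a
coset of `L(V₀)`, since a linear form `ℓ` with `𝐞 ∘ ℓ = 1` vanishes; and on a coset of `L(V₀)`
the ratio `χ_a(z) / χ_a(t)` is constant for `z` in the coset of `t`, so the polynomial vanishes
at `z` as well. Torsion of `t` only needs a common denominator of the coordinates of `v₀`.
-/

open FourierTransform Finset

theorem linearIndependent_addChar (G K : Type*) [AddMonoid G] [CommRing K] [IsDomain K] :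
    LinearIndependent K ((⇑) : AddChar G K → G → K) :=
  ((linearIndependent_monoidHom (Multiplicative G) K).comp _
    AddChar.toMonoidHomEquiv.injective).map' (LinearMap.funLeft K K Multiplicative.ofAdd)
    (LinearMap.ker_eq_bot.mpr
      (LinearMap.funLeft_injective_of_surjective _ _ _ Multiplicative.ofAdd.surjective))

theorem LinearIndependent.sum_fiber_eq_zero {ι β R M : Type*} [Ring R] [AddCommGroup M]
    [Module R M] [DecidableEq β] {v : β → M} (hv : LinearIndependent R v) (p : ι → β)
    {S : Finset ι} {c : ι → R} (h : ∑ a ∈ S, c a • v (p a) = 0) (b : β) :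
    ∑ a ∈ S with p a = b, c a = 0 := by
  have hfib : ∑ y ∈ S.image p, (∑ a ∈ S with p a = y, c a) • v y = 0 := by
    rw [← h, ← sum_fiberwise_of_maps_to fun a ha => mem_image_of_mem p ha]
    refine sum_congr rfl fun y _ => ?_
    rw [sum_smul]
    exact sum_congr rfl fun a ha => by rw [(mem_filter.mp ha).2]
  by_cases hb : b ∈ S.image p
  · exact linearIndependent_iff'.mp hv _ _ hfib b hb
  · refine sum_eq_zero fun a ha => absurd ?_ hb
    obtain ⟨haS, rfl⟩ := mem_filter.mp ha
    exact mem_image_of_mem p haS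

theorem Finset.sum_mul_eq_zero_of_sum_fiber_eq_zero {ι β K : Type*} [Field K] [DecidableEq β]
    {S : Finset ι} (p : ι → β) {c f g : ι → K} (hg : ∀ a ∈ S, g a ≠ 0)
    (hfg : ∀ a ∈ S, ∀ b ∈ S, p a = p b → f a * g b = f b * g a)
    (hfib : ∀ y, ∑ a ∈ S with p a = y, c a * g a = 0) :
    ∑ a ∈ S, c a * f a = 0 := by
  rw [← sum_fiberwise_of_maps_to fun a ha => mem_image_of_mem p ha]
  refine sum_eq_zero fun y hy => ?_
  obtain ⟨b, hbS, rfl⟩ := mem_image.mp hy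
  calc ∑ a ∈ S with p a = p b, c a * f a
      = ∑ a ∈ S with p a = p b, c a * g a * (f b / g b) := by
        refine sum_congr rfl fun a ha => ?_
        obtain ⟨haS, hab⟩ := mem_filter.mp ha
        rw [mul_assoc, ← mul_div_assoc, mul_comm (g a), ← hfg a haS b hbS hab,
          mul_div_cancel_right₀ _ (hg b hbS)]
    _ = 0 := by rw [← sum_mul, hfib, zero_mul]

theorem eq_zero_of_forall_fourierChar_mul_eq_one {c : ℝ} (h : ∀ t : ℝ, 𝐞 (t * c) = 1) :
    c = 0 := by
  by_contra hc
  apply Circle.exp_pi_ne_one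
  have := h (2 * c)⁻¹
  rwa [Real.fourierChar_apply', show 2 * Real.pi * ((2 * c)⁻¹ * c) = Real.pi by field_simp] at this

theorem fourierChar_ratCast_pow_eq_one {q : ℚ} {m : ℕ} (h : q.den ∣ m) : 𝐞 q ^ m = 1 := by
  obtain ⟨k, rfl⟩ := h
  rw [← AddChar.map_nsmul_eq_pow, nsmul_eq_mul, Real.fourierChar_apply']
  have : ((q.den * k : ℕ) : ℝ) * q = (q.num * k : ℤ) := by
    push_cast
    rw [mul_comm, ← mul_assoc, ← Rat.cast_natCast, ← Rat.cast_mul, Rat.mul_den_eq_num,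
      Rat.cast_intCast]
  rw [this, Circle.exp_two_pi_mul_int]

theorem AddChar.map_sum_eq_prod {ι A M : Type*} [AddCommMonoid A] [CommMonoid M]
    (ψ : AddChar A M) (s : Finset ι) (f : ι → A) : ψ (∑ i ∈ s, f i) = ∏ i ∈ s, ψ (f i) := by
  induction s using Finset.cons_induction with
  | empty => simp
  | cons i s hi ih => rw [sum_cons, prod_cons, AddChar.map_add_eq_mul, ih]

section ExpTorus

variable {r : ℕ}

theorem expTorusMap_apply_eq (x : Fin r → ℝ) (j : Fin r) :
    expTorusMap r x j = Circle.toUnits (𝐞 (x j)) :=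
  Units.ext <| congrArg Complex.exp <| by push_cast; ring

theorem prod_expTorusMap_zpow (x : Fin r → ℝ) (a : Fin r → ℤ) :
    ∏ j, expTorusMap r x j ^ a j = Circle.toUnits (𝐞 (∑ j, (a j : ℝ) * x j)) := by
  simp only [expTorusMap_apply_eq, ← map_zpow, ← map_prod, AddChar.map_sum_eq_prod,
    ← AddChar.map_zsmul_eq_zpow, zsmul_eq_mul]

theorem exists_pow_expTorusMap_eq_one {x : Fin r → ℝ} (hx : ∀ j, ∃ q : ℚ, x j = q) :
    ∃ m : ℕ, 0 < m ∧ ∀ j, expTorusMap r x j ^ m = 1 := by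
  choose q hq using hx
  refine ⟨∏ j, (q j).den, prod_pos fun j _ => (q j).pos, fun j => ?_⟩
  rw [expTorusMap_apply_eq, ← map_pow, hq, fourierChar_ratCast_pow_eq_one
    (dvd_prod_of_mem (fun j => (q j).den) (mem_univ j)), map_one]

end ExpTorus

section PairingChar

variable {ι : Type*} [Fintype ι]

noncomputable def pairingChar (V : Submodule ℝ (ι → ℝ)) (a : ι → ℤ) : AddChar V ℂ where
  toFun v := 𝐞 (∑ j, (a j : ℝ) * (v : ι → ℝ) j)
  map_zero_eq_one' := by simp
  map_add_eq_mul' u v := by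
    simp only [Submodule.coe_add, Pi.add_apply, mul_add, sum_add_distrib,
      AddChar.map_add_eq_mul, Circle.coe_mul]

theorem pairingChar_apply (V : Submodule ℝ (ι → ℝ)) (a : ι → ℤ) (v : V) :
    pairingChar V a v = 𝐞 (∑ j, (a j : ℝ) * (v : ι → ℝ) j) := rfl

theorem sum_sub_mul_eq_zero_of_pairingChar_eq {V : Submodule ℝ (ι → ℝ)} {a b : ι → ℤ}
    (h : pairingChar V a = pairingChar V b) {v : ι → ℝ} (hv : v ∈ V) :
    ∑ j, ((a - b) j : ℝ) * v j = 0 := by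
  refine eq_zero_of_forall_fourierChar_mul_eq_one fun t => ?_
  have := congrArg (· ⟨t • v, V.smul_mem t hv⟩) h
  simp only [pairingChar_apply, Circle.coe_inj] at this
  have hlin : t * ∑ j, ((a - b) j : ℝ) * v j
      = ∑ j, (a j : ℝ) * (t • v) j - ∑ j, (b j : ℝ) * (t • v) j := by
    simp only [Pi.sub_apply, Int.cast_sub, Pi.smul_apply, smul_eq_mul, mul_sum, ← sum_sub_distrib]
    exact sum_congr rfl fun j _ => by ring
  rw [hlin, AddChar.map_sub_eq_div, this, div_self']

end PairingChar

theorem sum_mul_prod_zpow_eq_zero_on_coset {r : ℕ} {V₀ : Submodule ℝ (Fin r → ℝ)}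
    {v₀ : Fin r → ℝ} {S : Finset (Fin r → ℤ)} {coef : (Fin r → ℤ) → ℂ}
    (h : ∀ v ∈ V₀, ∑ a ∈ S, coef a * Units.val (∏ j, expTorusMap r (v₀ + v) j ^ a j) = 0)
    {z : Fin r → ℂˣ}
    (hz : ∀ a : Fin r → ℤ, (∀ v ∈ V₀, ∑ j, (a j : ℝ) * v j = 0) →
      ∏ j, z j ^ a j = ∏ j, expTorusMap r v₀ j ^ a j) :
    ∑ a ∈ S, coef a * Units.val (∏ j, z j ^ a j) = 0 := by
  classical
  have hchar : ∑ a ∈ S, (coef a * Units.val (∏ j, expTorusMap r v₀ j ^ a j)) •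
      ⇑(pairingChar V₀ a) = 0 := by
    funext v
    rw [Pi.zero_apply, ← h v v.2]
    simp only [Finset.sum_apply, Pi.smul_apply, smul_eq_mul, pairingChar_apply,
      prod_expTorusMap_zpow, Pi.add_apply, mul_add, sum_add_distrib, AddChar.map_add_eq_mul,
      Circle.toUnits_apply, Units.val_mk0, Circle.coe_mul, mul_assoc]
  refine sum_mul_eq_zero_of_sum_fiber_eq_zero (pairingChar V₀) (fun a _ => Units.ne_zero _)
    (fun a _ b _ hab => ?_) ((linearIndependent_addChar V₀ ℂ).sum_fiber_eq_zero _ hchar)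
  have hcoset := hz (a - b) fun v hv => sum_sub_mul_eq_zero_of_pairingChar_eq hab hv
  simp only [Pi.sub_apply, zpow_sub, ← div_eq_mul_inv, prod_div_distrib,
    div_eq_div_iff_mul_eq_mul] at hcoset
  have hcoset' := congrArg Units.val hcoset
  rw [Units.val_mul, Units.val_mul] at hcoset'
  linear_combination hcoset'

theorem zariski_closure_of_exp_of_rational_affine_subspace_general
    (r : ℕ) (V₀ : Submodule ℝ (Fin r → ℝ))
    (v₀ : Fin r → ℝ) (hv₀ : ∀ j, ∃ q : ℚ, v₀ j = (q : ℝ)) :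
    (∃ m : ℕ, 0 < m ∧ ∀ j, (expTorusMap r v₀ j) ^ m = 1) ∧
    (∀ (S : Finset (Fin r → ℤ)) (coef : (Fin r → ℤ) → ℂ),
      ((∀ v ∈ V₀,
          ∑ a ∈ S, coef a * Units.val (∏ j, (expTorusMap r (v₀ + v) j) ^ (a j)) = 0)
        ↔
       (∀ z : Fin r → ℂˣ,
          (∀ a : Fin r → ℤ, (∀ v ∈ V₀, ∑ j, (a j : ℝ) * v j = 0) →
            (∏ j, (z j) ^ (a j)) = ∏ j, (expTorusMap r v₀ j) ^ (a j)) →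
          ∑ a ∈ S, coef a * Units.val (∏ j, (z j) ^ (a j)) = 0))) := by
  refine ⟨exists_pow_expTorusMap_eq_one hv₀, fun S coef =>
    ⟨fun h z hz => sum_mul_prod_zpow_eq_zero_on_coset h hz, fun h v hv => h _ fun a ha => ?_⟩⟩
  simp only [prod_expTorusMap_zpow, Pi.add_apply, mul_add, sum_add_distrib, ha v hv, add_zero]

/-- for a rational linear subspace `V₀ ⊆ ℝ^r` and a rational point `v₀ ∈ ℚ^r`,
with `t = E(v₀)` and `L = L(V₀)` the integral annihilator of `V₀`:
(i) `t` is a torsion element of `(ℂ^×)^r`; (ii) a Laurent polynomial vanishes on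
`E(v₀ + V₀)` iff it vanishes on the coset `{z : ∏ z_j^{a_j} = ∏ t_j^{a_j} for all a ∈ L}`. -/
theorem zariski_closure_of_exp_of_rational_affine_subspace
    (r : ℕ) (hr : 1 ≤ r) (V₀ : Submodule ℝ (Fin r → ℝ))
    (hV₀ : ∃ s : Set (Fin r → ℝ), (∀ v ∈ s, ∀ j, ∃ q : ℚ, v j = (q : ℝ)) ∧
      V₀ = Submodule.span ℝ s)
    (v₀ : Fin r → ℝ) (hv₀ : ∀ j, ∃ q : ℚ, v₀ j = (q : ℝ)) :
    (∃ m : ℕ, 0 < m ∧ ∀ j, (expTorusMap r v₀ j) ^ m = 1) ∧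
    (∀ (S : Finset (Fin r → ℤ)) (coef : (Fin r → ℤ) → ℂ),
      ((∀ v ∈ V₀,
          ∑ a ∈ S, coef a * Units.val (∏ j, (expTorusMap r (v₀ + v) j) ^ (a j)) = 0)
        ↔
       (∀ z : Fin r → ℂˣ,
          (∀ a : Fin r → ℤ, (∀ v ∈ V₀, ∑ j, (a j : ℝ) * v j = 0) →
            (∏ j, (z j) ^ (a j)) = ∏ j, (expTorusMap r v₀ j) ^ (a j)) →
          ∑ a ∈ S, coef a * Units.val (∏ j, (z j) ^ (a j)) = 0))) :=
  zariski_closure_of_exp_of_rational_affine_subspace_general r V₀ v₀ hv₀
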